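/- Let ℓ ≥ 2 and let τ : ℝ/ℤ → ℝ be α-Hölder with Hölder constant C, ∫τ = 0, and suppose τ is not cohomologous to 0 (i.e. there is no continuous μ with τ = μ∘m_ℓ - μ). Then there exists a point θ₊ ∈ ℝ/ℤ periodic of some period p under multiplication by ℓ such that τ(θ₊) + τ(ℓθ₊) + ⋯ + τ(ℓ^{p-1}θ₊) > 0, and likewise a periodic point θ₋ whose Birkhoff sum along its orbit is strictly negative. -/

import Mathlib

/-!
Suppose every periodic orbit of `m_ℓ : θ ↦ ℓθ` has nonpositive `τ`-Birkhoff sum. Every finite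
orbit segment `φ, ℓφ, …, ℓ^(n-1)φ` is shadowed, with errors decaying geometrically backwards
from its end, by a periodic orbit of period `n`; since `τ` is Hölder, all Birkhoff sums are
therefore bounded above. The supremum `μ(θ)` of the Birkhoff sums over backward orbit segments
ending at `θ` is then finite and satisfies `τ + μ ≤ μ ∘ m_ℓ`, and shadowing by inverse branches
makes `μ` `α`-Hölder. As `m_ℓ` preserves Lebesgue measure and `∫ τ = 0`, the continuous
nonnegative function `μ ∘ m_ℓ - μ - τ` has integral zero, hence vanishes. Applied to `±τ`, this
shows that a `τ` which is not a coboundary has periodic orbits of both signs.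
-/

open MeasureTheory Function

section BackwardBirkhoffSup

variable {X : Type*} (f : X → X) (g : X → ℝ)

/-- Junk (`sSup` of an unbounded set) unless the Birkhoff sums of `g` are bounded above. -/
noncomputable def backwardBirkhoffSup (x : X) : ℝ :=
  sSup ((fun p : ℕ × X => birkhoffSum f g p.1 p.2) '' {p | f^[p.1] p.2 = x})

variable {f g}

lemma birkhoffSum_le_backwardBirkhoffSup {K : ℝ} (hK : ∀ n y, birkhoffSum f g n y ≤ K)
    {n : ℕ} {x y : X} (hy : f^[n] y = x) : birkhoffSum f g n y ≤ backwardBirkhoffSup f g x :=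
  le_csSup ⟨K, by rintro _ ⟨p, -, rfl⟩; exact hK p.1 p.2⟩ ⟨(n, y), hy, rfl⟩

lemma backwardBirkhoffSup_le {x : X} {c : ℝ}
    (h : ∀ n y, f^[n] y = x → birkhoffSum f g n y ≤ c) : backwardBirkhoffSup f g x ≤ c :=
  csSup_le ⟨_, (0, x), rfl, rfl⟩ (by rintro _ ⟨p, hp, rfl⟩; exact h p.1 p.2 hp)

lemma add_backwardBirkhoffSup_le {K : ℝ} (hK : ∀ n y, birkhoffSum f g n y ≤ K) (x : X) :
    g x + backwardBirkhoffSup f g x ≤ backwardBirkhoffSup f g (f x) := by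
  rw [add_comm, ← le_sub_iff_add_le]
  refine backwardBirkhoffSup_le fun n y hy => le_sub_iff_add_le.2 ?_
  calc birkhoffSum f g n y + g x = birkhoffSum f g (n + 1) y := by rw [birkhoffSum_succ, hy]
    _ ≤ _ := birkhoffSum_le_backwardBirkhoffSup hK (by rw [iterate_succ_apply', hy])

end BackwardBirkhoffSup

lemma abs_birkhoffSum_sub_le_of_expanding {X : Type*} [PseudoMetricSpace X] {f : X → X}
    {g : X → ℝ} {C α : NNReal} (hg : HolderWith C α g) (hα : 0 < α) {L d : ℝ} (hL : 1 < L)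
    (hd : 0 ≤ d) {n : ℕ} {x y : X} (h : ∀ j < n, L ^ (n - j) * dist (f^[j] x) (f^[j] y) ≤ d) :
    |birkhoffSum f g n x - birkhoffSum f g n y| ≤ C * d ^ (α : ℝ) / (L ^ (α : ℝ) - 1) := by
  set r := (L ^ (α : ℝ))⁻¹
  have hLα : 1 < L ^ (α : ℝ) := Real.one_lt_rpow hL (by exact_mod_cast hα)
  have hr1 : r < 1 := inv_lt_one_of_one_lt₀ hLα
  have hterm : ∀ j < n, |g (f^[j] x) - g (f^[j] y)| ≤ C * d ^ (α : ℝ) * r ^ (n - j) := by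
    intro j hj
    have hpos : 0 < L ^ (n - j) := by positivity
    rw [← Real.dist_eq]
    calc dist (g (f^[j] x)) (g (f^[j] y)) ≤ C * (d / L ^ (n - j)) ^ (α : ℝ) :=
          hg.dist_le_of_le ((le_div_iff₀' hpos).2 (h j hj))
      _ = C * d ^ (α : ℝ) * r ^ (n - j) := by
          rw [Real.div_rpow hd hpos.le, ← Real.rpow_pow_comm (by linarith), inv_pow]; ring
  calc |birkhoffSum f g n x - birkhoffSum f g n y|
      = |∑ j ∈ Finset.range n, (g (f^[j] x) - g (f^[j] y))| := by
        simp only [birkhoffSum, Finset.sum_sub_distrib]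
    _ ≤ ∑ j ∈ Finset.range n, C * d ^ (α : ℝ) * r ^ (n - j) :=
        (Finset.abs_sum_le_sum_abs _ _).trans
          (Finset.sum_le_sum fun j hj => hterm j (Finset.mem_range.1 hj))
    _ = C * d ^ (α : ℝ) * ∑ k ∈ Finset.Ico 1 (n + 1), r ^ k := by
        rw [← Finset.mul_sum, Finset.range_eq_Ico, Finset.sum_Ico_reflect _ _ n.le_succ]
        simp
    _ ≤ C * d ^ (α : ℝ) * (r ^ 1 / (1 - r)) := by
        gcongr; exact geom_sum_Ico_le_of_lt_one (by positivity) hr1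
    _ = C * d ^ (α : ℝ) / (L ^ (α : ℝ) - 1) := by
        have : L ^ (α : ℝ) - 1 ≠ 0 := by linarith
        simp only [r]
        field_simp

lemma HolderWith.of_dist_le_mul {X Y : Type*} [PseudoMetricSpace X] [PseudoMetricSpace Y]
    {f : X → Y} {C r : NNReal} (h : ∀ x y, dist (f x) (f y) ≤ C * dist x y ^ (r : ℝ)) :
    HolderWith C r f := fun x y => by
  rw [edist_nndist, edist_nndist, ← ENNReal.coe_rpow_of_nonneg _ r.coe_nonneg,
    ← ENNReal.coe_mul, ENNReal.coe_le_coe, ← NNReal.coe_le_coe]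
  simpa using h x y

namespace UnitAddCircle

lemma dist_coe_le_abs_sub (a b : ℝ) : dist (a : UnitAddCircle) b ≤ |a - b| := by
  rw [dist_eq_norm, ← AddCircle.coe_sub]
  exact QuotientAddGroup.norm_mk_le_norm

lemma exists_coe_eq_abs_sub_le (x : ℝ) (θ : UnitAddCircle) :
    ∃ y : ℝ, (y : UnitAddCircle) = θ ∧ |y - x| ≤ dist θ x := by
  obtain ⟨w, hw⟩ : ∃ w : ℝ, (w : UnitAddCircle) = θ - x := QuotientAddGroup.mk_surjective _
  have hround : ((round w : ℝ) : UnitAddCircle) = 0 :=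
    (AddCircle.coe_eq_zero_iff 1).2 ⟨round w, by simp⟩
  refine ⟨x + (w - round w), ?_, ?_⟩
  · rw [AddCircle.coe_add, AddCircle.coe_sub, hround, hw]
    abel
  · rw [add_sub_cancel_left, dist_eq_norm, ← hw, norm_eq]

lemma pow_zsmul_coe (k : ℤ) (j : ℕ) (t : ℝ) :
    (k ^ j) • (t : UnitAddCircle) = ↑((k : ℝ) ^ j * t) := by
  rw [← AddCircle.coe_zsmul, zsmul_eq_mul]; push_cast; rfl


variable {ℓ : ℕ}

lemma pow_sub_mul_dist_pow_zsmul_coe_le {j n : ℕ} (hj : j ≤ n) (t s : ℝ) :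
    (ℓ : ℝ) ^ (n - j) * dist ((ℓ : ℤ) ^ j • (t : UnitAddCircle)) ((ℓ : ℤ) ^ j • (s : UnitAddCircle))
      ≤ (ℓ : ℝ) ^ n * |t - s| := by
  rw [pow_zsmul_coe, pow_zsmul_coe, Int.cast_natCast]
  calc _ ≤ (ℓ : ℝ) ^ (n - j) * |ℓ ^ j * t - ℓ ^ j * s| := by
        gcongr; exact dist_coe_le_abs_sub _ _
    _ = _ := by
        rw [← mul_sub, abs_mul, abs_of_nonneg (by positivity), ← mul_assoc, ← pow_add,
          Nat.sub_add_cancel hj]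

lemma exists_pow_zsmul_eq_shadowing (hℓ : ℓ ≠ 0) (n : ℕ) (φ θ : UnitAddCircle) :
    ∃ ψ : UnitAddCircle, (ℓ : ℤ) ^ n • ψ = θ ∧ ∀ j ≤ n,
      (ℓ : ℝ) ^ (n - j) * dist ((ℓ : ℤ) ^ j • φ) ((ℓ : ℤ) ^ j • ψ) ≤ dist ((ℓ : ℤ) ^ n • φ) θ := by
  obtain ⟨t, rfl⟩ : ∃ t : ℝ, (t : UnitAddCircle) = φ := QuotientAddGroup.mk_surjective φ
  obtain ⟨y, rfl, hy⟩ := exists_coe_eq_abs_sub_le ((ℓ : ℝ) ^ n * t) θ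
  have hN : (0 : ℝ) < (ℓ : ℝ) ^ n := by positivity
  refine ⟨↑(y / (ℓ : ℝ) ^ n), ?_, fun j hj => (pow_sub_mul_dist_pow_zsmul_coe_le hj _ _).trans ?_⟩
  · rw [pow_zsmul_coe, Int.cast_natCast, mul_div_cancel₀ _ hN.ne']
  · rw [pow_zsmul_coe, Int.cast_natCast, dist_comm]
    calc (ℓ : ℝ) ^ n * |t - y / (ℓ : ℝ) ^ n| = |y - (ℓ : ℝ) ^ n * t| := by
          rw [← abs_of_pos hN, ← abs_mul, abs_of_pos hN, abs_sub_comm, mul_sub,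
            mul_div_cancel₀ _ hN.ne']
      _ ≤ _ := hy

lemma exists_pow_zsmul_eq_self_shadowing (hℓ : 2 ≤ ℓ) {n : ℕ} (hn : 0 < n) (φ : UnitAddCircle) :
    ∃ ψ : UnitAddCircle, (ℓ : ℤ) ^ n • ψ = ψ ∧ ∀ j ≤ n,
      (ℓ : ℝ) ^ (n - j) * dist ((ℓ : ℤ) ^ j • φ) ((ℓ : ℤ) ^ j • ψ) ≤ 1 := by
  obtain ⟨t, rfl⟩ : ∃ t : ℝ, (t : UnitAddCircle) = φ := QuotientAddGroup.mk_surjective φ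
  set N : ℝ := (ℓ : ℝ) ^ n
  have hℓ' : (2 : ℝ) ≤ ℓ := by exact_mod_cast hℓ
  have hN : 2 ≤ N := hℓ'.trans (le_self_pow₀ (by linarith) hn.ne')
  have hN1 : N - 1 ≠ 0 := by linarith
  -- the periodic point `M / (N - 1)` satisfies `N y - y = M ∈ ℤ`
  set M := round (t * (N - 1))
  have hM : ((M : ℝ) : UnitAddCircle) = 0 := (AddCircle.coe_eq_zero_iff 1).2 ⟨M, by simp⟩
  refine ⟨↑(M / (N - 1)), ?_, fun j hj => (pow_sub_mul_dist_pow_zsmul_coe_le hj _ _).trans ?_⟩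
  · have hNy : N * (M / (N - 1)) = M / (N - 1) + M := by
      field_simp
      ring
    rw [pow_zsmul_coe, Int.cast_natCast, hNy, AddCircle.coe_add, hM, add_zero]
  · have hdiff : t - M / (N - 1) = (t * (N - 1) - M) / (N - 1) := by
      field_simp
    rw [hdiff, abs_div, abs_of_pos (by linarith : 0 < N - 1), mul_div_assoc',
      div_le_one (by linarith)]
    nlinarith [abs_sub_round (t * (N - 1))]

end UnitAddCircle

lemma MeasureTheory.MeasurePreserving.eq_comp_sub_of_le_comp_sub {X : Type*}
    [TopologicalSpace X] [CompactSpace X] [MeasurableSpace X] [OpensMeasurableSpace X]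
    {ν : Measure X} [IsFiniteMeasure ν] [ν.IsOpenPosMeasure] {f : X → X}
    (hf : MeasurePreserving f ν ν) (hfc : Continuous f) {g u : X → ℝ} (hg : Continuous g)
    (hu : Continuous u) (hint : ∫ x, g x ∂ν = 0) (hle : ∀ x, g x ≤ u (f x) - u x) :
    ∀ x, g x = u (f x) - u x := by
  have hintegrable : ∀ {h : X → ℝ}, Continuous h → Integrable h ν := fun h =>
    h.integrable_of_hasCompactSupport (HasCompactSupport.of_compactSpace _)
  have huf : Integrable (fun x => u (f x)) ν := hintegrable (hu.comp hfc)
  have hcomp : ∫ x, u (f x) ∂ν = ∫ x, u x ∂ν := by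
    rw [← integral_map hf.aemeasurable (by rw [hf.map_eq]; exact hu.aestronglyMeasurable),
      hf.map_eq]
  have hdefect : Continuous fun x => u (f x) - u x - g x :=
    ((hu.comp hfc).sub hu).sub hg
  have hzero : ∫ x, (u (f x) - u x - g x) ∂ν = 0 := by
    rw [integral_sub (f := fun x => u (f x) - u x) (huf.sub (hintegrable hu))
      (hintegrable hg), integral_sub huf (hintegrable hu), hcomp, hint, sub_self, sub_zero]
  have hae :=
    (integral_eq_zero_iff_of_nonneg (fun x => sub_nonneg.2 (hle x)) (hintegrable hdefect)).1 hzero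
  intro x
  have h0 : u (f x) - u x - g x = 0 :=
    congrFun ((hdefect.ae_eq_iff_eq ν continuous_const).1 hae) x
  linarith

section ExpandingCircle

variable {ℓ : ℕ} {τ : UnitAddCircle → ℝ} {C α : NNReal}

lemma birkhoffSum_le_of_forall_periodic_nonpos (hℓ : 2 ≤ ℓ) (hα : 0 < α)
    (hτ : HolderWith C α τ)
    (hper : ∀ θ p, 0 < p → (ℓ : ℤ) ^ p • θ = θ → birkhoffSum ((ℓ : ℤ) • ·) τ p θ ≤ 0)
    (n : ℕ) (φ : UnitAddCircle) :
    birkhoffSum ((ℓ : ℤ) • ·) τ n φ ≤ C / ((ℓ : ℝ) ^ (α : ℝ) - 1) := by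
  rcases n.eq_zero_or_pos with rfl | hn
  · rw [birkhoffSum_zero]
    have hLα : 1 < (ℓ : ℝ) ^ (α : ℝ) :=
      Real.one_lt_rpow (by exact_mod_cast hℓ) (by exact_mod_cast hα)
    exact div_nonneg C.coe_nonneg (by linarith)
  obtain ⟨ψ, hψ, hshadow⟩ := UnitAddCircle.exists_pow_zsmul_eq_self_shadowing hℓ hn φ
  have hclose := abs_birkhoffSum_sub_le_of_expanding (f := ((ℓ : ℤ) • ·)) (x := φ) (y := ψ)
    hτ hα (L := ℓ) (by exact_mod_cast hℓ) zero_le_one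
    (fun j hj => by simpa only [smul_iterate_apply] using hshadow j hj.le)
  rw [Real.one_rpow, mul_one] at hclose
  linarith [(abs_sub_le_iff.1 hclose).1, hper ψ n hn hψ]

lemma backwardBirkhoffSup_le_add (hℓ : 2 ≤ ℓ) (hα : 0 < α) (hτ : HolderWith C α τ) {K : ℝ}
    (hK : ∀ n φ, birkhoffSum ((ℓ : ℤ) • ·) τ n φ ≤ K) (θ θ' : UnitAddCircle) :
    backwardBirkhoffSup ((ℓ : ℤ) • ·) τ θ ≤
      backwardBirkhoffSup ((ℓ : ℤ) • ·) τ θ' +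
        C / ((ℓ : ℝ) ^ (α : ℝ) - 1) * dist θ θ' ^ (α : ℝ) := by
  refine backwardBirkhoffSup_le fun n φ hφ => ?_
  rw [smul_iterate_apply] at hφ
  obtain ⟨ψ, hψ, hshadow⟩ :=
    UnitAddCircle.exists_pow_zsmul_eq_shadowing (by omega : ℓ ≠ 0) n φ θ'
  have hclose := abs_birkhoffSum_sub_le_of_expanding (f := ((ℓ : ℤ) • ·)) (x := φ) (y := ψ)
    hτ hα (L := ℓ) (by exact_mod_cast hℓ) dist_nonneg
    (fun j hj => by simpa only [smul_iterate_apply, hφ] using hshadow j hj.le)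
  have hψ_le : birkhoffSum ((ℓ : ℤ) • ·) τ n ψ ≤ backwardBirkhoffSup ((ℓ : ℤ) • ·) τ θ' :=
    birkhoffSum_le_backwardBirkhoffSup hK (by rw [smul_iterate_apply, hψ])
  rw [mul_div_right_comm] at hclose
  linarith [(abs_sub_le_iff.1 hclose).1]

lemma holderWith_backwardBirkhoffSup (hℓ : 2 ≤ ℓ) (hα : 0 < α) (hτ : HolderWith C α τ) {K : ℝ}
    (hK : ∀ n φ, birkhoffSum ((ℓ : ℤ) • ·) τ n φ ≤ K) :
    HolderWith (C / ((ℓ : ℝ) ^ (α : ℝ) - 1)).toNNReal α (backwardBirkhoffSup ((ℓ : ℤ) • ·) τ) := by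
  have hLα : 1 < (ℓ : ℝ) ^ (α : ℝ) :=
    Real.one_lt_rpow (by exact_mod_cast hℓ) (by exact_mod_cast hα)
  refine HolderWith.of_dist_le_mul fun θ θ' => ?_
  rw [Real.coe_toNNReal _ (div_nonneg C.coe_nonneg (by linarith)), Real.dist_eq, abs_sub_le_iff]
  have h₁ := backwardBirkhoffSup_le_add hℓ hα hτ hK θ θ'
  have h₂ := backwardBirkhoffSup_le_add hℓ hα hτ hK θ' θ
  rw [dist_comm] at h₂
  constructor <;> linarith

theorem exists_continuous_coboundary_of_forall_periodic_birkhoffSum_nonpos (hℓ : 2 ≤ ℓ)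
    (hα : 0 < α) (hτ : HolderWith C α τ) (hint : ∫ θ, τ θ = 0)
    (hper : ∀ θ p, 0 < p → (ℓ : ℤ) ^ p • θ = θ → birkhoffSum ((ℓ : ℤ) • ·) τ p θ ≤ 0) :
    ∃ μ : UnitAddCircle → ℝ, Continuous μ ∧ ∀ θ, τ θ = μ ((ℓ : ℤ) • θ) - μ θ := by
  have hK := birkhoffSum_le_of_forall_periodic_nonpos hℓ hα hτ hper
  have hμ := (holderWith_backwardBirkhoffSup hℓ hα hτ hK).continuous hα
  have hpres : MeasurePreserving ((ℓ : ℤ) • · : UnitAddCircle → UnitAddCircle) :=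
    (AddCircle.ergodic_zsmul (by rw [Nat.abs_cast]; exact_mod_cast hℓ)).toMeasurePreserving
  exact ⟨_, hμ, hpres.eq_comp_sub_of_le_comp_sub (continuous_zsmul _) (hτ.continuous hα) hμ hint
    fun θ => le_sub_iff_add_le.2 (add_backwardBirkhoffSup_le hK θ)⟩

end ExpandingCircle

theorem stmt17 (ℓ : ℕ) (hℓ : 2 ≤ ℓ) (τ : UnitAddCircle → ℝ)
    (α C : NNReal) (hα : 0 < α) (hτ : HolderWith C α τ)
    (hint : ∫ θ : UnitAddCircle, τ θ = 0)
    (hnc : ¬ ∃ μ : UnitAddCircle → ℝ, Continuous μ ∧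
      ∀ θ, τ θ = μ ((ℓ : ℤ) • θ) - μ θ) :
    (∃ (θp : UnitAddCircle) (p : ℕ), 0 < p ∧ ((ℓ : ℤ) ^ p) • θp = θp ∧
      0 < ∑ i ∈ Finset.range p, τ (((ℓ : ℤ) ^ i) • θp)) ∧
    (∃ (θm : UnitAddCircle) (p : ℕ), 0 < p ∧ ((ℓ : ℤ) ^ p) • θm = θm ∧
      ∑ i ∈ Finset.range p, τ (((ℓ : ℤ) ^ i) • θm) < 0) := by
  have hsum : ∀ (g : UnitAddCircle → ℝ) p θ,
      birkhoffSum ((ℓ : ℤ) • ·) g p θ = ∑ i ∈ Finset.range p, g (((ℓ : ℤ) ^ i) • θ) := by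
    intro g p θ
    simp only [birkhoffSum, smul_iterate_apply]
  constructor
  · by_contra! h
    exact hnc (exists_continuous_coboundary_of_forall_periodic_birkhoffSum_nonpos hℓ hα hτ hint
      fun θ p hp hθ => (hsum τ p θ).trans_le (h θ p hp hθ))
  · by_contra! h
    obtain ⟨ν, hν, hcob⟩ := exists_continuous_coboundary_of_forall_periodic_birkhoffSum_nonpos
      (τ := fun θ => -τ θ) hℓ hα (fun x y => by simpa [edist_neg_neg] using hτ x y)
      (by rw [integral_neg, hint, neg_zero])
      fun θ p hp hθ => by
        rw [hsum, Finset.sum_neg_distrib, neg_nonpos]; exact h θ p hp hθ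
    exact hnc ⟨-ν, hν.neg, fun θ => by simp only [Pi.neg_apply]; linarith [hcob θ]⟩
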